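/- The second-order remainder for the multiplicative-IV moment functional admits the product-bias representation: R(P̄,P) = E_P[ (δ̄−δ)·( (ρ̄/δ̄^A)(δ̄^A−δ^A) − (ρ̄−ρ) ) + (ρ̄/δ̄^A)·(π̄₁−π₁)·( ((μ̄₁−μ₁)−δ̄(λ̄₁−λ₁))/π̄₁ + ((μ̄₀−μ₀)−δ̄(λ̄₀−λ₀))/(1−π̄₁) ) ]. -/

import Mathlib

/-!
Two conditioning steps. Conditioning on `X` turns `E[δ̄ A]` into `E[δ̄ ρ]`. Conditioning on
`(Z, X)` turns the residual `M(Y)(1 - A) - μ̄_Z - (A - λ̄_Z) δ̄` into its conditional mean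
`r_Z = (μ_Z - μ̄_Z) - (λ_Z - λ̄_Z) δ̄`; since `Z` is binary, the weight `(2Z - 1)/π̄_Z` then
splits into the two arms `Z/π̄₁` and `-(1 - Z)/(1 - π̄₁)`, and conditioning on `X` once more
replaces `Z` by `π₁`. What remains is the expectation of a function of `X` alone, and the
product-bias form is a pointwise field identity, driven by `δ δ^A = μ₁ - μ₀` and
`(ρ̄/δ̄^A) δ̄^A = ρ̄`.
-/

open MeasureTheory Filter
open scoped ENNReal

section ConditionalExpectation

variable {Ω 𝒳 : Type*} {m₀ : MeasurableSpace Ω} [MeasurableSpace 𝒳] {P : Measure Ω}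

theorem MeasureTheory.MemLp.div_of_le_abs {f g : Ω → ℝ} {c : ℝ} (hf : MemLp f ∞ P)
    (hg : AEStronglyMeasurable g P) (hc : 0 < c) (hgc : ∀ ω, c ≤ |g ω|) :
    MemLp (fun ω => f ω / g ω) ∞ P := by
  have hinv : MemLp (fun ω => (g ω)⁻¹) ∞ P :=
    memLp_top_of_bound hg.aemeasurable.inv.aestronglyMeasurable c⁻¹ (ae_of_all _ fun ω => by
      rw [norm_inv, Real.norm_eq_abs]
      exact inv_anti₀ hc (hgc ω))
  simpa only [div_eq_mul_inv] using hinv.mul' hf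

theorem memLp_top_comp_of_abs_le {X : Ω → 𝒳} (hX : Measurable X) {f : 𝒳 → ℝ}
    (hf : Measurable f) {C : ℝ} (hC : ∀ x, |f x| ≤ C) : MemLp (fun ω => f (X ω)) ∞ P :=
  memLp_top_of_bound (hf.comp hX).aestronglyMeasurable C (ae_of_all _ fun ω => hC (X ω))

theorem memLp_top_of_eq_zero_or_eq_one {Z : Ω → ℝ} (hZ : Measurable Z)
    (hZ01 : ∀ ω, Z ω = 0 ∨ Z ω = 1) : MemLp Z ∞ P :=
  memLp_top_of_bound hZ.aestronglyMeasurable 1 (ae_of_all _ fun ω => by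
    rcases hZ01 ω with h | h <;> simp [h])

theorem memLp_top_mul_add_one_sub_mul {Z f₀ f₁ : Ω → ℝ} (hZ : MemLp Z ∞ P) (hf₀ : MemLp f₀ ∞ P)
    (hf₁ : MemLp f₁ ∞ P) : MemLp (fun ω => Z ω * f₁ ω + (1 - Z ω) * f₀ ω) ∞ P :=
  (hf₁.mul' hZ).add (hf₀.mul' ((memLp_top_const 1).sub hZ))

theorem integral_comp_mul_eq_of_condExp_ae_eq [IsFiniteMeasure P] {W : Ω → 𝒳}
    (hW : Measurable W) {φ : 𝒳 → ℝ} (hφ : Measurable φ) (hφW : MemLp (fun ω => φ (W ω)) ∞ P)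
    {g gc : Ω → ℝ} (hg : Integrable g P)
    (hgc : P[g | MeasurableSpace.comap W inferInstance] =ᵐ[P] gc) :
    ∫ ω, φ (W ω) * g ω ∂P = ∫ ω, φ (W ω) * gc ω ∂P := by
  have hpull : P[(fun ω => φ (W ω)) * g | MeasurableSpace.comap W inferInstance]
      =ᵐ[P] (fun ω => φ (W ω)) * gc :=
    (condExp_mul_of_stronglyMeasurable_left (hφ.comp (comap_measurable W)).stronglyMeasurable
      (hg.mul_of_top_right hφW) hg).trans (EventuallyEq.rfl.mul hgc)
  calc ∫ ω, φ (W ω) * g ω ∂P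
      = ∫ ω, P[(fun ω => φ (W ω)) * g | MeasurableSpace.comap W inferInstance] ω ∂P :=
        (integral_condExp hW.comap_le).symm
    _ = ∫ ω, φ (W ω) * gc ω ∂P := integral_congr_ae hpull

theorem condExp_sub_sub_mul_ae_eq {m : MeasurableSpace Ω} (hm : m ≤ m₀)
    [IsFiniteMeasure P] {U A K L D Uc Ac : Ω → ℝ} (hU : Integrable U P) (hA : Integrable A P)
    (hK : StronglyMeasurable[m] K) (hKi : Integrable K P)
    (hL : StronglyMeasurable[m] L) (hLi : Integrable L P)
    (hD : StronglyMeasurable[m] D) (hDb : MemLp D ∞ P)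
    (hUc : P[U | m] =ᵐ[P] Uc) (hAc : P[A | m] =ᵐ[P] Ac) :
    P[fun ω => U ω - K ω - (A ω - L ω) * D ω | m]
      =ᵐ[P] fun ω => Uc ω - K ω - (Ac ω - L ω) * D ω := by
  have hAL : Integrable (A - L) P := hA.sub hLi
  have hALD : Integrable ((A - L) * D) P := hAL.mul_of_top_left hDb
  have hUK : P[U - K | m] =ᵐ[P] Uc - K := by
    refine (condExp_sub hU hKi m).trans ?_
    rw [condExp_of_stronglyMeasurable hm hK hKi]
    exact hUc.sub EventuallyEq.rfl
  have hALc : P[A - L | m] =ᵐ[P] Ac - L := by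
    refine (condExp_sub hA hLi m).trans ?_
    rw [condExp_of_stronglyMeasurable hm hL hLi]
    exact hAc.sub EventuallyEq.rfl
  exact (condExp_sub (hU.sub hKi) hALD m).trans (hUK.sub
    ((condExp_mul_of_stronglyMeasurable_right hD hALD hAL).trans (hALc.mul EventuallyEq.rfl)))

theorem integral_mul_add_one_sub_mul_eq_of_condExp_ae_eq [IsFiniteMeasure P] {X : Ω → 𝒳}
    (hX : Measurable X) {Z : Ω → ℝ} {π : 𝒳 → ℝ} (hZ : Integrable Z P)
    (hπ : P[Z | MeasurableSpace.comap X inferInstance] =ᵐ[P] fun ω => π (X ω))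
    {g₀ g₁ : 𝒳 → ℝ} (hg₀ : Measurable g₀) (hg₁ : Measurable g₁)
    (hg₀b : MemLp (fun ω => g₀ (X ω)) ∞ P) (hg₁b : MemLp (fun ω => g₁ (X ω)) ∞ P) :
    ∫ ω, (Z ω * g₁ (X ω) + (1 - Z ω) * g₀ (X ω)) ∂P
      = ∫ ω, (π (X ω) * g₁ (X ω) + (1 - π (X ω)) * g₀ (X ω)) ∂P := by
  have hπi : Integrable (fun ω => π (X ω)) P := integrable_condExp.congr hπ
  have hgb : MemLp (fun ω => (g₁ - g₀) (X ω)) ∞ P := hg₁b.sub hg₀b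
  have hg₀i : Integrable (fun ω => g₀ (X ω)) P := hg₀b.integrable le_top
  have hgZ : Integrable (fun ω => (g₁ - g₀) (X ω) * Z ω) P := hZ.mul_of_top_right hgb
  have hgπ : Integrable (fun ω => (g₁ - g₀) (X ω) * π (X ω)) P := hπi.mul_of_top_right hgb
  calc ∫ ω, (Z ω * g₁ (X ω) + (1 - Z ω) * g₀ (X ω)) ∂P
      = ∫ ω, ((g₁ - g₀) (X ω) * Z ω + g₀ (X ω)) ∂P := by
        congr 1; ext ω; simp only [Pi.sub_apply]; ring
    _ = ∫ ω, ((g₁ - g₀) (X ω) * π (X ω) + g₀ (X ω)) ∂P := by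
      rw [integral_add hgZ hg₀i, integral_add hgπ hg₀i,
        integral_comp_mul_eq_of_condExp_ae_eq hX (hg₁.sub hg₀) hgb hZ hπ]
    _ = ∫ ω, (π (X ω) * g₁ (X ω) + (1 - π (X ω)) * g₀ (X ω)) ∂P := by
      congr 1; ext ω; simp only [Pi.sub_apply]; ring

end ConditionalExpectation

theorem abs_ipw_weight_le {z p c : ℝ} (hz : z = 0 ∨ z = 1) (hc : 0 < c) (hp : c ≤ p ∧ p ≤ 1 - c) :
    |(2 * z - 1) / (z * p + (1 - z) * (1 - p))| ≤ c⁻¹ := by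
  have hp₀ : 0 < p := hc.trans_le hp.1
  have hp₁ : 0 < 1 - p := by linarith [hp.2]
  rcases hz with rfl | rfl
  · rw [show (2 * 0 - 1) / (0 * p + (1 - 0) * (1 - p)) = -(1 - p)⁻¹ by ring, abs_neg, abs_inv,
      abs_of_pos hp₁]
    exact inv_anti₀ hc (by linarith [hp.2])
  · rw [show (2 * 1 - 1) / (1 * p + (1 - 1) * (1 - p)) = p⁻¹ by ring, abs_inv, abs_of_pos hp₀]
    exact inv_anti₀ hc hp.1

section InverseProbabilityWeighting

variable {Ω 𝒳 : Type*} {m₀ : MeasurableSpace Ω} [MeasurableSpace 𝒳] {P : Measure Ω}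
  {X : Ω → 𝒳} {Z : Ω → ℝ} {π₁ π₁b w : 𝒳 → ℝ} {d : ℝ → 𝒳 → ℝ} {c : ℝ}

theorem memLp_top_ipw_weight (hX : Measurable X) (hZ : Measurable Z)
    (hZ01 : ∀ ω, Z ω = 0 ∨ Z ω = 1) (hπb : Measurable π₁b) (hc : 0 < c)
    (hπbbd : ∀ x, c ≤ π₁b x ∧ π₁b x ≤ 1 - c) :
    MemLp (fun ω => (2 * Z ω - 1) / (Z ω * π₁b (X ω) + (1 - Z ω) * (1 - π₁b (X ω)))) ∞ P :=
  memLp_top_of_bound (Measurable.aestronglyMeasurable (by fun_prop)) c⁻¹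
    (ae_of_all _ fun ω => abs_ipw_weight_le (hZ01 ω) hc (hπbbd (X ω)))

theorem memLp_top_ipw_arms (hX : Measurable X) (hπb : Measurable π₁b) (hc : 0 < c)
    (hπbbd : ∀ x, c ≤ π₁b x ∧ π₁b x ≤ 1 - c) (hwb : MemLp (fun ω => w (X ω)) ∞ P)
    (hdb : ∀ z, MemLp (fun ω => d z (X ω)) ∞ P) :
    MemLp (fun ω => w (X ω) / π₁b (X ω) * d 1 (X ω)) ∞ P ∧
      MemLp (fun ω => -(w (X ω) / (1 - π₁b (X ω))) * d 0 (X ω)) ∞ P := by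
  have hπbX : Measurable fun ω => π₁b (X ω) := hπb.comp hX
  refine ⟨(hdb 1).mul' (hwb.div_of_le_abs hπbX.aestronglyMeasurable hc fun ω => ?_),
    (hdb 0).mul' (hwb.div_of_le_abs (measurable_const.sub hπbX).aestronglyMeasurable hc
      fun ω => ?_).neg⟩
  · exact (hπbbd (X ω)).1.trans (le_abs_self _)
  · exact (by linarith [(hπbbd (X ω)).2] : c ≤ 1 - π₁b (X ω)).trans (le_abs_self _)

theorem integral_ipw_mul_eq [IsFiniteMeasure P] (hX : Measurable X) (hZ : Measurable Z)
    (hZ01 : ∀ ω, Z ω = 0 ∨ Z ω = 1)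
    (hπ : P[Z | MeasurableSpace.comap X inferInstance] =ᵐ[P] fun ω => π₁ (X ω))
    (hπb : Measurable π₁b) (hc : 0 < c) (hπbbd : ∀ x, c ≤ π₁b x ∧ π₁b x ≤ 1 - c)
    (hw : Measurable w) (hwb : MemLp (fun ω => w (X ω)) ∞ P)
    (hd : ∀ z, Measurable (d z)) (hdb : ∀ z, MemLp (fun ω => d z (X ω)) ∞ P)
    {V : Ω → ℝ} (hV : Integrable V P)
    (hVd : P[V | MeasurableSpace.comap (fun ω => (Z ω, X ω)) inferInstance]
      =ᵐ[P] fun ω => d (Z ω) (X ω)) :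
    ∫ ω, w (X ω) * ((2 * Z ω - 1) / (Z ω * π₁b (X ω) + (1 - Z ω) * (1 - π₁b (X ω)))) * V ω ∂P
      = ∫ ω, (π₁ (X ω) * (w (X ω) / π₁b (X ω) * d 1 (X ω))
          + (1 - π₁ (X ω)) * (-(w (X ω) / (1 - π₁b (X ω))) * d 0 (X ω))) ∂P := by
  obtain ⟨h₁, h₀⟩ := memLp_top_ipw_arms hX hπb hc hπbbd hwb hdb
  rw [integral_comp_mul_eq_of_condExp_ae_eq (W := fun ω => (Z ω, X ω))
    (φ := fun p => w p.2 * ((2 * p.1 - 1) / (p.1 * π₁b p.2 + (1 - p.1) * (1 - π₁b p.2))))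
    (hZ.prodMk hX) (by fun_prop)
    ((memLp_top_ipw_weight hX hZ hZ01 hπb hc hπbbd).mul' hwb) hV hVd]
  calc _ = ∫ ω, (Z ω * (w (X ω) / π₁b (X ω) * d 1 (X ω))
          + (1 - Z ω) * (-(w (X ω) / (1 - π₁b (X ω))) * d 0 (X ω))) ∂P := by
        refine integral_congr_ae (ae_of_all _ fun ω => ?_)
        rcases hZ01 ω with h | h <;> simp only [h] <;> ring
    _ = _ := integral_mul_add_one_sub_mul_eq_of_condExp_ae_eq hX
        (g₀ := fun x => -(w x / (1 - π₁b x)) * d 0 x) (g₁ := fun x => w x / π₁b x * d 1 x)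
        ((memLp_top_of_eq_zero_or_eq_one hZ hZ01).integrable le_top) hπ
        (by fun_prop) (by fun_prop) h₀ h₁

theorem integrable_ipw_mean [IsFiniteMeasure P] (hX : Measurable X)
    (hπ : P[Z | MeasurableSpace.comap X inferInstance] =ᵐ[P] fun ω => π₁ (X ω))
    (hπb : Measurable π₁b) (hc : 0 < c) (hπbbd : ∀ x, c ≤ π₁b x ∧ π₁b x ≤ 1 - c)
    (hwb : MemLp (fun ω => w (X ω)) ∞ P) (hdb : ∀ z, MemLp (fun ω => d z (X ω)) ∞ P) :
    Integrable (fun ω => π₁ (X ω) * (w (X ω) / π₁b (X ω) * d 1 (X ω))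
      + (1 - π₁ (X ω)) * (-(w (X ω) / (1 - π₁b (X ω))) * d 0 (X ω))) P := by
  have hπi : Integrable (fun ω => π₁ (X ω)) P := integrable_condExp.congr hπ
  obtain ⟨h₁, h₀⟩ := memLp_top_ipw_arms hX hπb hc hπbbd hwb hdb
  exact (hπi.mul_of_top_left h₁).add (((integrable_const 1).sub hπi).mul_of_top_left h₀)

end InverseProbabilityWeighting

section WaldRatio

variable {Ω 𝒳 : Type*} {m₀ : MeasurableSpace Ω} {P : Measure Ω}
  {X : Ω → 𝒳} {Z A Y : Ω → ℝ} {M : ℝ → ℝ} {μ lam μb lamb : ℝ → 𝒳 → ℝ} {D : 𝒳 → ℝ}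

noncomputable abbrev waldRatio (μ lam : ℝ → 𝒳 → ℝ) (x : 𝒳) : ℝ :=
  (μ 1 x - μ 0 x) / (lam 1 x - lam 0 x)

-- `M(y)(1 - a) - μ_z(x) - (a - λ_z(x)) D(x)`, where for `z ∈ {0, 1}` the arm `f_z` is written
-- `z f₁ + (1 - z) f₀`.
abbrev ivResidual (M : ℝ → ℝ) (μ lam : ℝ → 𝒳 → ℝ) (D : 𝒳 → ℝ) (x : 𝒳) (z a y : ℝ) : ℝ :=
  M y * (1 - a) - (z * μ 1 x + (1 - z) * μ 0 x) - (a - (z * lam 1 x + (1 - z) * lam 0 x)) * D x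

abbrev ivResidualMean (μ lam μb lamb : ℝ → 𝒳 → ℝ) (D : 𝒳 → ℝ) (z : ℝ) (x : 𝒳) : ℝ :=
  μ z x - μb z x - (lam z x - lamb z x) * D x

theorem memLp_top_ivResidual (hZ : MemLp Z ∞ P) (hA : MemLp A ∞ P)
    (hMY : MemLp (fun ω => M (Y ω)) ∞ P) (hμX : ∀ z, MemLp (fun ω => μ z (X ω)) ∞ P)
    (hlamX : ∀ z, MemLp (fun ω => lam z (X ω)) ∞ P) (hDX : MemLp (fun ω => D (X ω)) ∞ P) :
    MemLp (fun ω => ivResidual M μ lam D (X ω) (Z ω) (A ω) (Y ω)) ∞ P :=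
  ((((memLp_top_const 1).sub hA).mul' hMY).sub
      (memLp_top_mul_add_one_sub_mul hZ (hμX 0) (hμX 1))).sub
    (hDX.mul' (hA.sub (memLp_top_mul_add_one_sub_mul hZ (hlamX 0) (hlamX 1))))

theorem remainder_integrand_eq_product_bias {x : 𝒳} {ρ π₁ ρb π₁b : 𝒳 → ℝ}
    (hδA : lam 1 x - lam 0 x ≠ 0) (hδAb : lamb 1 x - lamb 0 x ≠ 0) (hπb₀ : π₁b x ≠ 0)
    (hπb₁ : 1 - π₁b x ≠ 0) :
    waldRatio μb lamb x * ρ x - waldRatio μ lam x * ρ x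
        + (π₁ x * (ρb x / (lamb 1 x - lamb 0 x) / π₁b x
              * ivResidualMean μ lam μb lamb (waldRatio μb lamb) 1 x)
          + (1 - π₁ x) * (-(ρb x / (lamb 1 x - lamb 0 x) / (1 - π₁b x))
              * ivResidualMean μ lam μb lamb (waldRatio μb lamb) 0 x))
      = (waldRatio μb lamb x - waldRatio μ lam x)
          * (ρb x / (lamb 1 x - lamb 0 x) * ((lamb 1 x - lamb 0 x) - (lam 1 x - lam 0 x))
            - (ρb x - ρ x))
        + ρb x / (lamb 1 x - lamb 0 x) * (π₁b x - π₁ x)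
          * (((μb 1 x - μ 1 x) - waldRatio μb lamb x * (lamb 1 x - lam 1 x)) / π₁b x
            + ((μb 0 x - μ 0 x) - waldRatio μb lamb x * (lamb 0 x - lam 0 x)) / (1 - π₁b x)) := by
  simp only [waldRatio, ivResidualMean]
  field_simp
  ring

end WaldRatio

section InfluenceFunction

variable {Ω 𝒳 : Type*} {m₀ : MeasurableSpace Ω} [MeasurableSpace 𝒳] {P : Measure Ω}
  {X : Ω → 𝒳} {Z A Y : Ω → ℝ} {M : ℝ → ℝ} {μ lam μb lamb : ℝ → 𝒳 → ℝ} {D : 𝒳 → ℝ} {c : ℝ}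

theorem memLp_top_waldRatio (hX : Measurable X) (hlam : ∀ z, Measurable (lam z))
    (hμX : ∀ z, MemLp (fun ω => μ z (X ω)) ∞ P) (hc : 0 < c)
    (hδA : ∀ x, c ≤ |lam 1 x - lam 0 x|) : MemLp (fun ω => waldRatio μ lam (X ω)) ∞ P :=
  ((hμX 1).sub (hμX 0)).div_of_le_abs
    (((hlam 1).comp hX).sub ((hlam 0).comp hX)).aestronglyMeasurable hc fun ω => hδA (X ω)

theorem condExp_ivResidual_ae_eq [IsFiniteMeasure P] (hX : Measurable X) (hZ : Measurable Z)
    (hZ01 : ∀ ω, Z ω = 0 ∨ Z ω = 1) (hAi : Integrable A P)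
    (hU : Integrable (fun ω => M (Y ω) * (1 - A ω)) P)
    (hμb : ∀ z, Measurable (μb z)) (hlamb : ∀ z, Measurable (lamb z))
    (hμbX : ∀ z, MemLp (fun ω => μb z (X ω)) ∞ P)
    (hlambX : ∀ z, MemLp (fun ω => lamb z (X ω)) ∞ P)
    (hD : Measurable D) (hDX : MemLp (fun ω => D (X ω)) ∞ P)
    (hμ : P[(fun ω => M (Y ω) * (1 - A ω)) |
        MeasurableSpace.comap (fun ω => (Z ω, X ω)) inferInstance]
      =ᵐ[P] fun ω => μ (Z ω) (X ω))
    (hlam : P[A | MeasurableSpace.comap (fun ω => (Z ω, X ω)) inferInstance]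
      =ᵐ[P] fun ω => lam (Z ω) (X ω)) :
    P[fun ω => ivResidual M μb lamb D (X ω) (Z ω) (A ω) (Y ω) |
        MeasurableSpace.comap (fun ω => (Z ω, X ω)) inferInstance]
      =ᵐ[P] fun ω => ivResidualMean μ lam μb lamb D (Z ω) (X ω) := by
  have hZW : Measurable[MeasurableSpace.comap (fun ω => (Z ω, X ω)) inferInstance] Z :=
    measurable_fst.comp (comap_measurable _)
  have hXW : Measurable[MeasurableSpace.comap (fun ω => (Z ω, X ω)) inferInstance] X :=
    measurable_snd.comp (comap_measurable _)
  have hZb := memLp_top_of_eq_zero_or_eq_one (P := P) hZ hZ01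
  refine (condExp_sub_sub_mul_ae_eq (hZ.prodMk hX).comap_le hU hAi
    (Measurable.stronglyMeasurable (by fun_prop))
    ((memLp_top_mul_add_one_sub_mul hZb (hμbX 0) (hμbX 1)).integrable le_top)
    (Measurable.stronglyMeasurable (by fun_prop))
    ((memLp_top_mul_add_one_sub_mul hZb (hlambX 0) (hlambX 1)).integrable le_top)
    (hD.comp hXW).stronglyMeasurable hDX hμ hlam).trans (ae_of_all _ fun ω => ?_)
  rcases hZ01 ω with h | h <;> simp [h]

theorem remainder_eq_integral_ipw_mean [IsProbabilityMeasure P] (hX : Measurable X)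
    (hZ : Measurable Z) (hZ01 : ∀ ω, Z ω = 0 ∨ Z ω = 1) (hAb : MemLp A ∞ P)
    (hMY : MemLp (fun ω => M (Y ω)) ∞ P) {π₁ ρ π₁b w δ : 𝒳 → ℝ}
    (hπ : P[Z | MeasurableSpace.comap X inferInstance] =ᵐ[P] fun ω => π₁ (X ω))
    (hρ : P[A | MeasurableSpace.comap X inferInstance] =ᵐ[P] fun ω => ρ (X ω))
    (hμ : P[(fun ω => M (Y ω) * (1 - A ω)) |
        MeasurableSpace.comap (fun ω => (Z ω, X ω)) inferInstance]
      =ᵐ[P] fun ω => μ (Z ω) (X ω))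
    (hlam : P[A | MeasurableSpace.comap (fun ω => (Z ω, X ω)) inferInstance]
      =ᵐ[P] fun ω => lam (Z ω) (X ω))
    (hμmeas : ∀ z, Measurable (μ z)) (hlammeas : ∀ z, Measurable (lam z))
    (hμbmeas : ∀ z, Measurable (μb z)) (hlambmeas : ∀ z, Measurable (lamb z))
    (hμbX : ∀ z, MemLp (fun ω => μb z (X ω)) ∞ P)
    (hlambX : ∀ z, MemLp (fun ω => lamb z (X ω)) ∞ P)
    (hπb : Measurable π₁b) (hc : 0 < c) (hπbbd : ∀ x, c ≤ π₁b x ∧ π₁b x ≤ 1 - c)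
    (hD : Measurable D) (hDX : MemLp (fun ω => D (X ω)) ∞ P)
    (hrX : ∀ z, MemLp (fun ω => ivResidualMean μ lam μb lamb D z (X ω)) ∞ P)
    (hw : Measurable w) (hwX : MemLp (fun ω => w (X ω)) ∞ P)
    (hδX : MemLp (fun ω => δ (X ω)) ∞ P) (hPbar : ℝ) :
    hPbar - ∫ ω, δ (X ω) * ρ (X ω) ∂P
      + ∫ ω, ((D (X ω) * A ω - hPbar)
        + w (X ω) * ((2 * Z ω - 1) / (Z ω * π₁b (X ω) + (1 - Z ω) * (1 - π₁b (X ω))))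
          * ivResidual M μb lamb D (X ω) (Z ω) (A ω) (Y ω)) ∂P
      = ∫ ω, (D (X ω) * ρ (X ω) - δ (X ω) * ρ (X ω)
        + (π₁ (X ω) * (w (X ω) / π₁b (X ω) * ivResidualMean μ lam μb lamb D 1 (X ω))
          + (1 - π₁ (X ω))
            * (-(w (X ω) / (1 - π₁b (X ω))) * ivResidualMean μ lam μb lamb D 0 (X ω)))) ∂P := by
  have hAi : Integrable A P := hAb.integrable le_top
  have hU : Integrable (fun ω => M (Y ω) * (1 - A ω)) P :=
    (((memLp_top_const 1).sub hAb).mul' hMY).integrable le_top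
  have hV := memLp_top_ivResidual (memLp_top_of_eq_zero_or_eq_one hZ hZ01) hAb hMY hμbX hlambX hDX
  have hVc :=
    condExp_ivResidual_ae_eq hX hZ hZ01 hAi hU hμbmeas hlambmeas hμbX hlambX hD hDX hμ hlam
  have hDA : Integrable (fun ω => D (X ω) * A ω) P := hAi.mul_of_top_right hDX
  have hDAh : Integrable (fun ω => D (X ω) * A ω - hPbar) P := hDA.sub (integrable_const hPbar)
  have hcorr : Integrable (fun ω => w (X ω)
      * ((2 * Z ω - 1) / (Z ω * π₁b (X ω) + (1 - Z ω) * (1 - π₁b (X ω))))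
      * ivResidual M μb lamb D (X ω) (Z ω) (A ω) (Y ω)) P :=
    (hV.integrable le_top).mul_of_top_right
      ((memLp_top_ipw_weight hX hZ hZ01 hπb hc hπbbd).mul' hwX)
  have hρX : Integrable (fun ω => ρ (X ω)) P := integrable_condExp.congr hρ
  have hDρ : Integrable (fun ω => D (X ω) * ρ (X ω)) P := hρX.mul_of_top_right hDX
  have hδρ : Integrable (fun ω => δ (X ω) * ρ (X ω)) P := hρX.mul_of_top_right hδX
  have hdiff : Integrable (fun ω => D (X ω) * ρ (X ω) - δ (X ω) * ρ (X ω)) P := hDρ.sub hδρ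
  rw [integral_add hDAh hcorr, integral_sub hDA (integrable_const hPbar), integral_const,
    integral_comp_mul_eq_of_condExp_ae_eq hX hD hDX hAi hρ,
    integral_ipw_mul_eq hX hZ hZ01 hπ hπb hc hπbbd hw hwX (fun z => by fun_prop) hrX
      (hV.integrable le_top) hVc,
    integral_add hdiff (integrable_ipw_mean hX hπ hπb hc hπbbd hwX hrX), integral_sub hDρ hδρ]
  simp only [probReal_univ, smul_eq_mul, one_mul]
  ring

end InfluenceFunction

theorem stmt6_general
    {Ω 𝒳 : Type*} [MeasurableSpace Ω] [MeasurableSpace 𝒳]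
    (P : Measure Ω) [IsProbabilityMeasure P]
    (X : Ω → 𝒳) (Z A Y : Ω → ℝ)
    (hX : Measurable X) (hZ : Measurable Z) (hA : Measurable A) (hY : Measurable Y)
    (hZ01 : ∀ ω, Z ω = 0 ∨ Z ω = 1) (hA01 : ∀ ω, A ω = 0 ∨ A ω = 1)
    (M : ℝ → ℝ) (hMmeas : Measurable M) (hMbdd : ∃ C, ∀ y, |M y| ≤ C)
    -- true nuisance functions (versions of the conditional expectations)
    (π₁ ρ : 𝒳 → ℝ) (μ lam : ℝ → 𝒳 → ℝ)
    (hμmeas : ∀ z, Measurable (μ z)) (hlammeas : ∀ z, Measurable (lam z))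
    (hπ : P[Z | MeasurableSpace.comap X inferInstance] =ᵐ[P] fun ω => π₁ (X ω))
    (hρ : P[A | MeasurableSpace.comap X inferInstance] =ᵐ[P] fun ω => ρ (X ω))
    (hμ : P[(fun ω => M (Y ω) * (1 - A ω)) |
        MeasurableSpace.comap (fun ω => (Z ω, X ω)) inferInstance]
      =ᵐ[P] fun ω => μ (Z ω) (X ω))
    (hlam : P[A | MeasurableSpace.comap (fun ω => (Z ω, X ω)) inferInstance]
      =ᵐ[P] fun ω => lam (Z ω) (X ω))
    -- candidate (possibly misspecified) nuisance functions
    (π₁b ρb : 𝒳 → ℝ) (μb lamb : ℝ → 𝒳 → ℝ)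
    (hπbmeas : Measurable π₁b) (hρbmeas : Measurable ρb)
    (hμbmeas : ∀ z, Measurable (μb z)) (hlambmeas : ∀ z, Measurable (lamb z))
    -- regularity: denominators bounded away from zero, nuisances bounded
    (c : ℝ) (hc : 0 < c)
    (hπbbd : ∀ x, c ≤ π₁b x ∧ π₁b x ≤ 1 - c)
    (hδA : ∀ x, c ≤ |lam 1 x - lam 0 x|) (hδAb : ∀ x, c ≤ |lamb 1 x - lamb 0 x|)
    (hnuisbd : ∃ C, ∀ z x, |μ z x| ≤ C ∧ |lam z x| ≤ C ∧ |ρ x| ≤ C ∧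
      |μb z x| ≤ C ∧ |lamb z x| ≤ C ∧ |ρb x| ≤ C)
    -- the number `h(β,P̄)` computed under the candidate distribution
    (hPbar : ℝ) :
    hPbar
      - (∫ ω, ((μ 1 (X ω) - μ 0 (X ω)) / (lam 1 (X ω) - lam 0 (X ω))) * ρ (X ω) ∂P)
      + (∫ ω,
          (((μb 1 (X ω) - μb 0 (X ω)) / (lamb 1 (X ω) - lamb 0 (X ω))) * A ω - hPbar)
            + (ρb (X ω) / (lamb 1 (X ω) - lamb 0 (X ω)))
                * ((2 * Z ω - 1) / (Z ω * π₁b (X ω) + (1 - Z ω) * (1 - π₁b (X ω))))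
                * (M (Y ω) * (1 - A ω)
                    - (Z ω * μb 1 (X ω) + (1 - Z ω) * μb 0 (X ω))
                    - (A ω - (Z ω * lamb 1 (X ω) + (1 - Z ω) * lamb 0 (X ω)))
                        * ((μb 1 (X ω) - μb 0 (X ω)) / (lamb 1 (X ω) - lamb 0 (X ω)))) ∂P)
      = ∫ ω,
          (((μb 1 (X ω) - μb 0 (X ω)) / (lamb 1 (X ω) - lamb 0 (X ω)))
              - ((μ 1 (X ω) - μ 0 (X ω)) / (lam 1 (X ω) - lam 0 (X ω))))
            * ((ρb (X ω) / (lamb 1 (X ω) - lamb 0 (X ω)))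
                  * ((lamb 1 (X ω) - lamb 0 (X ω)) - (lam 1 (X ω) - lam 0 (X ω)))
                - (ρb (X ω) - ρ (X ω)))
          + (ρb (X ω) / (lamb 1 (X ω) - lamb 0 (X ω))) * (π₁b (X ω) - π₁ (X ω))
              * (((μb 1 (X ω) - μ 1 (X ω))
                    - ((μb 1 (X ω) - μb 0 (X ω)) / (lamb 1 (X ω) - lamb 0 (X ω)))
                        * (lamb 1 (X ω) - lam 1 (X ω))) / π₁b (X ω)
                + ((μb 0 (X ω) - μ 0 (X ω))
                    - ((μb 1 (X ω) - μb 0 (X ω)) / (lamb 1 (X ω) - lamb 0 (X ω)))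
                        * (lamb 0 (X ω) - lam 0 (X ω))) / (1 - π₁b (X ω))) ∂P := by
  obtain ⟨CM, hCM⟩ := hMbdd
  obtain ⟨C, hC⟩ := hnuisbd
  have hμX z := memLp_top_comp_of_abs_le (P := P) hX (hμmeas z) fun x => (hC z x).1
  have hlamX z := memLp_top_comp_of_abs_le (P := P) hX (hlammeas z) fun x => (hC z x).2.1
  have hμbX z := memLp_top_comp_of_abs_le (P := P) hX (hμbmeas z) fun x => (hC z x).2.2.2.1
  have hlambX z := memLp_top_comp_of_abs_le (P := P) hX (hlambmeas z) fun x => (hC z x).2.2.2.2.1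
  have hδX := memLp_top_waldRatio hX hlammeas hμX hc hδA
  have hδbX := memLp_top_waldRatio hX hlambmeas hμbX hc hδAb
  have hrX : ∀ z, MemLp (fun ω => ivResidualMean μ lam μb lamb (waldRatio μb lamb) z (X ω)) ∞ P :=
    fun z => ((hμX z).sub (hμbX z)).sub (hδbX.mul' ((hlamX z).sub (hlambX z)))
  have hwX : MemLp (fun ω => ρb (X ω) / (lamb 1 (X ω) - lamb 0 (X ω))) ∞ P :=
    (memLp_top_comp_of_abs_le hX hρbmeas fun x => (hC 0 x).2.2.2.2.2).div_of_le_abs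
      (((hlambmeas 1).comp hX).sub ((hlambmeas 0).comp hX)).aestronglyMeasurable hc
      fun ω => hδAb (X ω)
  rw [remainder_eq_integral_ipw_mean (D := waldRatio μb lamb)
      (w := fun x => ρb x / (lamb 1 x - lamb 0 x)) hX hZ hZ01
      (memLp_top_of_eq_zero_or_eq_one hA hA01) (memLp_top_comp_of_abs_le hY hMmeas hCM)
      hπ hρ hμ hlam hμmeas hlammeas hμbmeas hlambmeas hμbX hlambX hπbmeas hc hπbbd (by fun_prop)
      hδbX hrX (by fun_prop) hwX hδX hPbar]
  exact integral_congr_ae (ae_of_all _ fun ω => remainder_integrand_eq_product_bias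
    (abs_pos.mp (hc.trans_le (hδA _))) (abs_pos.mp (hc.trans_le (hδAb _)))
    (hc.trans_le (hπbbd _).1).ne' (by linarith [(hπbbd (X ω)).2]))

/-- The second-order remainder for the multiplicative-IV moment functional
admits the product-bias representation:
`R(P̄,P) = E_P[(δ̄−δ)((ρ̄/δ̄^A)(δ̄^A−δ^A) − (ρ̄−ρ))
  + (ρ̄/δ̄^A)(π̄₁−π₁)(((μ̄₁−μ₁)−δ̄(λ̄₁−λ₁))/π̄₁ + ((μ̄₀−μ₀)−δ̄(λ̄₀−λ₀))/(1−π̄₁))]`. -/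
theorem stmt6
    {Ω 𝒳 : Type*} [MeasurableSpace Ω] [MeasurableSpace 𝒳]
    (P : Measure Ω) [IsProbabilityMeasure P]
    (X : Ω → 𝒳) (Z A Y : Ω → ℝ)
    (hX : Measurable X) (hZ : Measurable Z) (hA : Measurable A) (hY : Measurable Y)
    (hZ01 : ∀ ω, Z ω = 0 ∨ Z ω = 1) (hA01 : ∀ ω, A ω = 0 ∨ A ω = 1)
    (M : ℝ → ℝ) (hMmeas : Measurable M) (hMbdd : ∃ C, ∀ y, |M y| ≤ C)
    -- true nuisance functions (versions of the conditional expectations)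
    (π₁ ρ : 𝒳 → ℝ) (μ lam : ℝ → 𝒳 → ℝ)
    (hπmeas : Measurable π₁) (hρmeas : Measurable ρ)
    (hμmeas : ∀ z, Measurable (μ z)) (hlammeas : ∀ z, Measurable (lam z))
    (hπ : P[Z | MeasurableSpace.comap X inferInstance] =ᵐ[P] fun ω => π₁ (X ω))
    (hρ : P[A | MeasurableSpace.comap X inferInstance] =ᵐ[P] fun ω => ρ (X ω))
    (hμ : P[(fun ω => M (Y ω) * (1 - A ω)) |
        MeasurableSpace.comap (fun ω => (Z ω, X ω)) inferInstance]
      =ᵐ[P] fun ω => μ (Z ω) (X ω))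
    (hlam : P[A | MeasurableSpace.comap (fun ω => (Z ω, X ω)) inferInstance]
      =ᵐ[P] fun ω => lam (Z ω) (X ω))
    -- candidate (possibly misspecified) nuisance functions
    (π₁b ρb : 𝒳 → ℝ) (μb lamb : ℝ → 𝒳 → ℝ)
    (hπbmeas : Measurable π₁b) (hρbmeas : Measurable ρb)
    (hμbmeas : ∀ z, Measurable (μb z)) (hlambmeas : ∀ z, Measurable (lamb z))
    -- regularity: denominators bounded away from zero, nuisances bounded
    (c : ℝ) (hc : 0 < c)
    (hπbd : ∀ x, c ≤ π₁ x ∧ π₁ x ≤ 1 - c) (hπbbd : ∀ x, c ≤ π₁b x ∧ π₁b x ≤ 1 - c)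
    (hδA : ∀ x, c ≤ |lam 1 x - lam 0 x|) (hδAb : ∀ x, c ≤ |lamb 1 x - lamb 0 x|)
    (hnuisbd : ∃ C, ∀ z x, |μ z x| ≤ C ∧ |lam z x| ≤ C ∧ |ρ x| ≤ C ∧
      |μb z x| ≤ C ∧ |lamb z x| ≤ C ∧ |ρb x| ≤ C)
    -- the number `h(β,P̄)` computed under the candidate distribution
    (hPbar : ℝ) :
    hPbar
      - (∫ ω, ((μ 1 (X ω) - μ 0 (X ω)) / (lam 1 (X ω) - lam 0 (X ω))) * ρ (X ω) ∂P)
      + (∫ ω,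
          (((μb 1 (X ω) - μb 0 (X ω)) / (lamb 1 (X ω) - lamb 0 (X ω))) * A ω - hPbar)
            + (ρb (X ω) / (lamb 1 (X ω) - lamb 0 (X ω)))
                * ((2 * Z ω - 1) / (Z ω * π₁b (X ω) + (1 - Z ω) * (1 - π₁b (X ω))))
                * (M (Y ω) * (1 - A ω)
                    - (Z ω * μb 1 (X ω) + (1 - Z ω) * μb 0 (X ω))
                    - (A ω - (Z ω * lamb 1 (X ω) + (1 - Z ω) * lamb 0 (X ω)))
                        * ((μb 1 (X ω) - μb 0 (X ω)) / (lamb 1 (X ω) - lamb 0 (X ω)))) ∂P)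
      = ∫ ω,
          (((μb 1 (X ω) - μb 0 (X ω)) / (lamb 1 (X ω) - lamb 0 (X ω)))
              - ((μ 1 (X ω) - μ 0 (X ω)) / (lam 1 (X ω) - lam 0 (X ω))))
            * ((ρb (X ω) / (lamb 1 (X ω) - lamb 0 (X ω)))
                  * ((lamb 1 (X ω) - lamb 0 (X ω)) - (lam 1 (X ω) - lam 0 (X ω)))
                - (ρb (X ω) - ρ (X ω)))
          + (ρb (X ω) / (lamb 1 (X ω) - lamb 0 (X ω))) * (π₁b (X ω) - π₁ (X ω))
              * (((μb 1 (X ω) - μ 1 (X ω))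
                    - ((μb 1 (X ω) - μb 0 (X ω)) / (lamb 1 (X ω) - lamb 0 (X ω)))
                        * (lamb 1 (X ω) - lam 1 (X ω))) / π₁b (X ω)
                + ((μb 0 (X ω) - μ 0 (X ω))
                    - ((μb 1 (X ω) - μb 0 (X ω)) / (lamb 1 (X ω) - lamb 0 (X ω)))
                        * (lamb 0 (X ω) - lam 0 (X ω))) / (1 - π₁b (X ω))) ∂P :=
  stmt6_general P X Z A Y hX hZ hA hY hZ01 hA01 M hMmeas hMbdd π₁ ρ μ lam hμmeas hlammeas hπ hρ hμ
    hlam π₁b ρb μb lamb hπbmeas hρbmeas hμbmeas hlambmeas c hc hπbbd hδA hδAb hnuisbd hPbar
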